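/- arXiv:1310.4772 — 2 statements merged into one kernel-verified Lean document; each statement's English description precedes it below -/
import Mathlib

section
/- Let G be a matrix Lie group, τ : 𝔤 → G a local diffeomorphism with τ(0) = e, and 𝓛̄_d(Δ_a^j, g_a^j, ξ_a^j, η_a^j) := 𝓛_d(Δ_a^j, g_a^j, g_a^{j+1}, g_{a+1}^j) the trivialized discrete Lagrangian, where ξ_a^j = τ^{-1}((g_a^j)^{-1} g_a^{j+1})/Δt and η_a^j = τ^{-1}((g_a^j)^{-1} g_{a+1}^j)/Δs. Defining μ_a^j := (d^Rτ^{-1}_{Δt ξ_a^j})* D_ξ 𝓛̄_a^j and λ_a^j := (d^Rτ^{-1}_{Δs η_a^j})* D_η 𝓛̄_a^j, the partial derivatives of 𝓛_d are related to those of 𝓛̄_d by: (g_a^j)^{-1} D₁𝓛_a^j = (g_a^j)^{-1} D_g 𝓛̄_a^j - (1/Δt) μ_a^j - (1/Δs) λ_a^j; (g_a^{j+1})^{-1} D₂𝓛_a^j = (1/Δt) Ad*_{τ(Δt ξ_a^j)} μ_a^j; (g_{a+1}^j)^{-1} D₃𝓛_a^j = (1/Δs) Ad*_{τ(Δs η_a^j)}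 λ_a^j. -/
open scoped Topology

noncomputable section

variable {A : Type*} [NormedRing A] [NormedAlgebra ℝ A] [CompleteSpace A]

/-- Partial differential of `L : A³ → ℝ` in its first slot. -/
def T1 (L : A × A × A → ℝ) (p : A × A × A) : A →L[ℝ] ℝ :=
  fderiv ℝ (fun x => L (x, p.2.1, p.2.2)) p.1

/-- Partial differential of `L : A³ → ℝ` in its second slot. -/
def T2 (L : A × A × A → ℝ) (p : A × A × A) : A →L[ℝ] ℝ :=
  fderiv ℝ (fun x => L (p.1, x, p.2.2)) p.2.1

/-- Partial differential of `L : A³ → ℝ` in its third slot. -/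
def T3 (L : A × A × A → ℝ) (p : A × A × A) : A →L[ℝ] ℝ :=
  fderiv ℝ (fun x => L (p.1, p.2.1, x)) p.2.2

/-- Right trivialized derivative of the (local) inverse of `τ`. -/
def dRtauInv (τ τinv : A → A) (ξ η : A) : A :=
  fderiv ℝ τinv (τ ξ) (η * τ ξ)

lemma T1_apply (L : A × A × A → ℝ) (p : A × A × A) (hL : DifferentiableAt ℝ L p) (u : A) :
    T1 L p u = fderiv ℝ L p (u, 0, 0) := by
  have hj : HasFDerivAt (fun x : A => (x, p.2.1, p.2.2))
      ((ContinuousLinearMap.id ℝ A).prod 0) p.1 :=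
    (hasFDerivAt_id _).prodMk (hasFDerivAt_const _ _)
  have hc : HasFDerivAt (fun x : A => L (x, p.2.1, p.2.2))
      ((fderiv ℝ L p).comp ((ContinuousLinearMap.id ℝ A).prod 0)) p.1 :=
    hL.hasFDerivAt.comp p.1 hj
  rw [show T1 L p = _ from hc.fderiv]; rfl

lemma T2_apply (L : A × A × A → ℝ) (p : A × A × A) (hL : DifferentiableAt ℝ L p) (v : A) :
    T2 L p v = fderiv ℝ L p (0, v, 0) := by
  have hj : HasFDerivAt (fun x : A => (p.1, x, p.2.2))
      ((0 : A →L[ℝ] A).prod ((ContinuousLinearMap.id ℝ A).prod 0)) p.2.1 :=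
    (hasFDerivAt_const _ _).prodMk ((hasFDerivAt_id _).prodMk (hasFDerivAt_const _ _))
  have hc : HasFDerivAt (fun x : A => L (p.1, x, p.2.2))
      ((fderiv ℝ L p).comp ((0 : A →L[ℝ] A).prod ((ContinuousLinearMap.id ℝ A).prod 0))) p.2.1 :=
    hL.hasFDerivAt.comp p.2.1 hj
  rw [show T2 L p = _ from hc.fderiv]; rfl

lemma T3_apply (L : A × A × A → ℝ) (p : A × A × A) (hL : DifferentiableAt ℝ L p) (w : A) :
    T3 L p w = fderiv ℝ L p (0, 0, w) := by
  have hj : HasFDerivAt (fun x : A => (p.1, p.2.1, x))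
      ((0 : A →L[ℝ] A).prod ((0 : A →L[ℝ] A).prod (ContinuousLinearMap.id ℝ A))) p.2.2 :=
    (hasFDerivAt_const _ _).prodMk ((hasFDerivAt_const _ _).prodMk (hasFDerivAt_id _))
  have hc : HasFDerivAt (fun x : A => L (p.1, p.2.1, x))
      ((fderiv ℝ L p).comp ((0 : A →L[ℝ] A).prod ((0 : A →L[ℝ] A).prod
        (ContinuousLinearMap.id ℝ A)))) p.2.2 :=
    hL.hasFDerivAt.comp p.2.2 hj
  rw [show T3 L p = _ from hc.fderiv]; rfl

lemma fderiv_tri (L : A × A × A → ℝ) (p : A × A × A) (hL : DifferentiableAt ℝ L p)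
    (u v w : A) :
    fderiv ℝ L p (u, v, w) = T1 L p u + T2 L p v + T3 L p w := by
  rw [T1_apply L p hL, T2_apply L p hL, T3_apply L p hL]
  have : ((u, v, w) : A × A × A)
      = (u, (0:A), (0:A)) + ((0:A), v, (0:A)) + ((0:A), (0:A), w) := by
    simp [Prod.ext_iff]
  rw [this, map_add, map_add]

/-- Relations between the (left trivialized) partial derivatives of the
covariant discrete Lagrangian `𝓛_d(Δ, g₁, g₂, g₃)` on the Lie group and those
of its trivialization `𝓛̄_d(Δ, g, ξ, η)`, with
`ξ = τ⁻¹(g₁⁻¹g₂)/Δt`, `η = τ⁻¹(g₁⁻¹g₃)/Δs`,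
`μ = (d^Rτ⁻¹_{Δt ξ})* D_ξ𝓛̄`, `λ = (d^Rτ⁻¹_{Δs η})* D_η𝓛̄`. -/
theorem trivialized_partial_derivative_relations
    (τ τinv : A → A) (hτ : ContDiff ℝ (⊤ : ℕ∞) τ) (hτinv : ContDiff ℝ (⊤ : ℕ∞) τinv)
    (hτ0 : τ 0 = 1)
    (Δt Δs : ℝ) (hΔt : 0 < Δt) (hΔs : 0 < Δs)
    (Lag Lbar : A × A × A → ℝ) (hLbar : ContDiff ℝ (⊤ : ℕ∞) Lbar)
    (hrel : ∀ p : A × A × A,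
      Lag p = Lbar (p.1, Δt⁻¹ • τinv (Ring.inverse p.1 * p.2.1),
                         Δs⁻¹ • τinv (Ring.inverse p.1 * p.2.2)))
    (g1 g2 g3 : A) (h1 : IsUnit g1) (h2 : IsUnit g2) (h3 : IsUnit g3)
    (hloc2 : ∀ᶠ x in 𝓝 (Ring.inverse g1 * g2), τ (τinv x) = x)
    (hloc3 : ∀ᶠ x in 𝓝 (Ring.inverse g1 * g3), τ (τinv x) = x) :
    let ξ0 : A := Δt⁻¹ • τinv (Ring.inverse g1 * g2)
    let η0 : A := Δs⁻¹ • τinv (Ring.inverse g1 * g3)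
    let q : A × A × A := (g1, ξ0, η0)
    -- `⟨μ, w⟩` and `⟨λ, w⟩`
    let μ : A → ℝ := fun w => (T2 Lbar q) (dRtauInv τ τinv (Δt • ξ0) w)
    let lam : A → ℝ := fun w => (T3 Lbar q) (dRtauInv τ τinv (Δs • η0) w)
    -- (1) `g₁⁻¹ D₁𝓛 = g₁⁻¹ D_g𝓛̄ - (1/Δt) μ - (1/Δs) λ`
    (∀ ζ : A, (T1 Lag (g1, g2, g3)) (g1 * ζ) =
        (T1 Lbar q) (g1 * ζ) - Δt⁻¹ * μ ζ - Δs⁻¹ * lam ζ) ∧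
    -- (2) `g₂⁻¹ D₂𝓛 = (1/Δt) Ad*_{τ(Δt ξ)} μ`
    (∀ ζ : A, (T2 Lag (g1, g2, g3)) (g2 * ζ) =
        Δt⁻¹ * μ (τ (Δt • ξ0) * ζ * Ring.inverse (τ (Δt • ξ0)))) ∧
    -- (3) `g₃⁻¹ D₃𝓛 = (1/Δs) Ad*_{τ(Δs η)} λ`
    (∀ ζ : A, (T3 Lag (g1, g2, g3)) (g3 * ζ) =
        Δs⁻¹ * lam (τ (Δs • η0) * ζ * Ring.inverse (τ (Δs • η0)))) := by

  intro ξ0 η0 q μ lam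
  have hLd : Differentiable ℝ Lbar := hLbar.differentiable (by simp)
  have hτd : Differentiable ℝ τinv := hτinv.differentiable (by simp)
  have hu1g1 : Ring.inverse g1 * g1 = 1 := Ring.inverse_mul_cancel g1 h1
  have hU2 : IsUnit (Ring.inverse g1 * g2) := (isUnit_ringInverse.mpr h1).mul h2
  have hU3 : IsUnit (Ring.inverse g1 * g3) := (isUnit_ringInverse.mpr h1).mul h3
  have hts : Δt • ξ0 = τinv (Ring.inverse g1 * g2) := by
    show Δt • (Δt⁻¹ • _) = _
    rw [smul_smul, mul_inv_cancel₀ hΔt.ne', one_smul]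
  have hss : Δs • η0 = τinv (Ring.inverse g1 * g3) := by
    show Δs • (Δs⁻¹ • _) = _
    rw [smul_smul, mul_inv_cancel₀ hΔs.ne', one_smul]
  have htau2 : τ (Δt • ξ0) = Ring.inverse g1 * g2 := by rw [hts]; exact hloc2.self_of_nhds
  have htau3 : τ (Δs • η0) = Ring.inverse g1 * g3 := by rw [hss]; exact hloc3.self_of_nhds
  have hμ : ∀ w, μ w
      = T2 Lbar q (fderiv ℝ τinv (Ring.inverse g1 * g2) (w * (Ring.inverse g1 * g2))) := by
    intro w
    show T2 Lbar q (dRtauInv τ τinv (Δt • ξ0) w) = _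
    rw [dRtauInv, htau2]
  have hlam : ∀ w, lam w
      = T3 Lbar q (fderiv ℝ τinv (Ring.inverse g1 * g3) (w * (Ring.inverse g1 * g3))) := by
    intro w
    show T3 Lbar q (dRtauInv τ τinv (Δs • η0) w) = _
    rw [dRtauInv, htau3]
  -- derivatives of the inner maps
  have hinv : HasFDerivAt (Ring.inverse : A → A)
      (-(ContinuousLinearMap.mulLeftRight ℝ A (Ring.inverse g1) (Ring.inverse g1))) g1 := by
    have h := hasFDerivAt_ringInverse (𝕜 := ℝ) h1.unit
    rwa [← Ring.inverse_unit h1.unit, h1.unit_spec] at h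
  -- A useful abbreviation for the second/third slot inner derivatives at fixed g1
  have hmul2 : HasFDerivAt (fun x : A => Ring.inverse g1 * x)
      (ContinuousLinearMap.mul ℝ A (Ring.inverse g1)) g2 :=
    (ContinuousLinearMap.mul ℝ A (Ring.inverse g1)).hasFDerivAt
  have hmul3 : HasFDerivAt (fun x : A => Ring.inverse g1 * x)
      (ContinuousLinearMap.mul ℝ A (Ring.inverse g1)) g3 :=
    (ContinuousLinearMap.mul ℝ A (Ring.inverse g1)).hasFDerivAt
  refine ⟨?_, ?_, ?_⟩
  · -- (1)
    intro ζ
    have hf : (fun x : A => Lag (x, g2, g3)) = fun x : A =>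
        Lbar (x, Δt⁻¹ • τinv (Ring.inverse x * g2), Δs⁻¹ • τinv (Ring.inverse x * g3)) := by
      funext x; exact hrel (x, g2, g3)
    have hA : HasFDerivAt (fun x : A => Ring.inverse x * g2)
        ((-(ContinuousLinearMap.mulLeftRight ℝ A (Ring.inverse g1)
          (Ring.inverse g1))).smulRight g2) g1 := hinv.mul_const' g2
    have hB : HasFDerivAt (fun x : A => Ring.inverse x * g3)
        ((-(ContinuousLinearMap.mulLeftRight ℝ A (Ring.inverse g1)
          (Ring.inverse g1))).smulRight g3) g1 := hinv.mul_const' g3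
    have hA' : HasFDerivAt (fun x : A => Δt⁻¹ • τinv (Ring.inverse x * g2))
        (Δt⁻¹ • ((fderiv ℝ τinv (Ring.inverse g1 * g2)).comp
          ((-(ContinuousLinearMap.mulLeftRight ℝ A (Ring.inverse g1)
            (Ring.inverse g1))).smulRight g2))) g1 :=
      (((hτd _).hasFDerivAt).comp g1 hA).const_smul Δt⁻¹
    have hB' : HasFDerivAt (fun x : A => Δs⁻¹ • τinv (Ring.inverse x * g3))
        (Δs⁻¹ • ((fderiv ℝ τinv (Ring.inverse g1 * g3)).comp
          ((-(ContinuousLinearMap.mulLeftRight ℝ A (Ring.inverse g1)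
            (Ring.inverse g1))).smulRight g3))) g1 :=
      (((hτd _).hasFDerivAt).comp g1 hB).const_smul Δs⁻¹
    have hk : HasFDerivAt (fun x : A =>
        ((x, Δt⁻¹ • τinv (Ring.inverse x * g2), Δs⁻¹ • τinv (Ring.inverse x * g3)) : A × A × A))
        ((ContinuousLinearMap.id ℝ A).prod ((Δt⁻¹ • ((fderiv ℝ τinv (Ring.inverse g1 * g2)).comp
          ((-(ContinuousLinearMap.mulLeftRight ℝ A (Ring.inverse g1)
            (Ring.inverse g1))).smulRight g2))).prod
          (Δs⁻¹ • ((fderiv ℝ τinv (Ring.inverse g1 * g3)).comp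
          ((-(ContinuousLinearMap.mulLeftRight ℝ A (Ring.inverse g1)
            (Ring.inverse g1))).smulRight g3))))) g1 :=
      (hasFDerivAt_id g1).prodMk (hA'.prodMk hB')
    have hfd : fderiv ℝ (fun x : A => Lag (x, g2, g3)) g1
        = ((fderiv ℝ Lbar q).comp
          ((ContinuousLinearMap.id ℝ A).prod ((Δt⁻¹ • ((fderiv ℝ τinv (Ring.inverse g1 * g2)).comp
          ((-(ContinuousLinearMap.mulLeftRight ℝ A (Ring.inverse g1)
            (Ring.inverse g1))).smulRight g2))).prod
          (Δs⁻¹ • ((fderiv ℝ τinv (Ring.inverse g1 * g3)).comp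
          ((-(ContinuousLinearMap.mulLeftRight ℝ A (Ring.inverse g1)
            (Ring.inverse g1))).smulRight g3)))))) := by
      rw [hf]; exact (((hLd q).hasFDerivAt).comp g1 hk).fderiv
    rw [show T1 Lag (g1, g2, g3) = _ from hfd]
    have harg2 : Ring.inverse g1 * (g1 * ζ) * Ring.inverse g1 * g2
        = ζ * (Ring.inverse g1 * g2) := by
      rw [← mul_assoc, ← mul_assoc, hu1g1, one_mul, mul_assoc]
    have harg3 : Ring.inverse g1 * (g1 * ζ) * Ring.inverse g1 * g3
        = ζ * (Ring.inverse g1 * g3) := by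
      rw [← mul_assoc, ← mul_assoc, hu1g1, one_mul, mul_assoc]
    simp only [ContinuousLinearMap.comp_apply, ContinuousLinearMap.prod_apply,
      ContinuousLinearMap.coe_id', id_eq, ContinuousLinearMap.smul_apply,
      ContinuousLinearMap.smulRight_apply, ContinuousLinearMap.neg_apply,
      ContinuousLinearMap.mulLeftRight_apply, smul_eq_mul, neg_mul]
    rw [harg2, harg3, map_neg, map_neg, fderiv_tri Lbar q (hLd q), hμ, hlam, map_smul, map_smul]
    simp only [smul_eq_mul, smul_neg, mul_neg, map_neg]
    ring
  · -- (2)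
    intro ζ
    have hf : (fun x : A => Lag (g1, x, g3)) = fun x : A =>
        Lbar (g1, Δt⁻¹ • τinv (Ring.inverse g1 * x), Δs⁻¹ • τinv (Ring.inverse g1 * g3)) := by
      funext x; exact hrel (g1, x, g3)
    have hA' : HasFDerivAt (fun x : A => Δt⁻¹ • τinv (Ring.inverse g1 * x))
        (Δt⁻¹ • ((fderiv ℝ τinv (Ring.inverse g1 * g2)).comp
          (ContinuousLinearMap.mul ℝ A (Ring.inverse g1)))) g2 :=
      (((hτd _).hasFDerivAt).comp g2 hmul2).const_smul Δt⁻¹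
    have hk : HasFDerivAt (fun x : A =>
        ((g1, Δt⁻¹ • τinv (Ring.inverse g1 * x),
          Δs⁻¹ • τinv (Ring.inverse g1 * g3)) : A × A × A))
        ((0 : A →L[ℝ] A).prod ((Δt⁻¹ • ((fderiv ℝ τinv (Ring.inverse g1 * g2)).comp
          (ContinuousLinearMap.mul ℝ A (Ring.inverse g1)))).prod 0)) g2 :=
      (hasFDerivAt_const _ _).prodMk (hA'.prodMk (hasFDerivAt_const _ _))
    have hfd : fderiv ℝ (fun x : A => Lag (g1, x, g3)) g2
        = ((fderiv ℝ Lbar q).comp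
          ((0 : A →L[ℝ] A).prod ((Δt⁻¹ • ((fderiv ℝ τinv (Ring.inverse g1 * g2)).comp
          (ContinuousLinearMap.mul ℝ A (Ring.inverse g1)))).prod 0))) := by
      rw [hf]; exact (((hLd q).hasFDerivAt).comp g2 hk).fderiv
    rw [show T2 Lag (g1, g2, g3) = _ from hfd]
    simp only [ContinuousLinearMap.comp_apply, ContinuousLinearMap.prod_apply,
      ContinuousLinearMap.zero_apply, ContinuousLinearMap.smul_apply,
      ContinuousLinearMap.mul_apply']
    rw [← mul_assoc, fderiv_tri Lbar q (hLd q), hμ, map_smul]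
    have harg : τ (Δt • ξ0) * ζ * Ring.inverse (τ (Δt • ξ0)) * (Ring.inverse g1 * g2)
        = Ring.inverse g1 * g2 * ζ := by
      rw [htau2, Ring.inverse_mul_cancel_right _ _ hU2]
    rw [harg]
    simp [smul_eq_mul]
  · -- (3)
    intro ζ
    have hf : (fun x : A => Lag (g1, g2, x)) = fun x : A =>
        Lbar (g1, Δt⁻¹ • τinv (Ring.inverse g1 * g2), Δs⁻¹ • τinv (Ring.inverse g1 * x)) := by
      funext x; exact hrel (g1, g2, x)
    have hA' : HasFDerivAt (fun x : A => Δs⁻¹ • τinv (Ring.inverse g1 * x))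
        (Δs⁻¹ • ((fderiv ℝ τinv (Ring.inverse g1 * g3)).comp
          (ContinuousLinearMap.mul ℝ A (Ring.inverse g1)))) g3 :=
      (((hτd _).hasFDerivAt).comp g3 hmul3).const_smul Δs⁻¹
    have hk : HasFDerivAt (fun x : A =>
        ((g1, Δt⁻¹ • τinv (Ring.inverse g1 * g2),
          Δs⁻¹ • τinv (Ring.inverse g1 * x)) : A × A × A))
        ((0 : A →L[ℝ] A).prod ((0 : A →L[ℝ] A).prod
          (Δs⁻¹ • ((fderiv ℝ τinv (Ring.inverse g1 * g3)).comp
          (ContinuousLinearMap.mul ℝ A (Ring.inverse g1)))))) g3 :=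
      (hasFDerivAt_const _ _).prodMk ((hasFDerivAt_const _ _).prodMk hA')
    have hfd : fderiv ℝ (fun x : A => Lag (g1, g2, x)) g3
        = ((fderiv ℝ Lbar q).comp
          ((0 : A →L[ℝ] A).prod ((0 : A →L[ℝ] A).prod
          (Δs⁻¹ • ((fderiv ℝ τinv (Ring.inverse g1 * g3)).comp
          (ContinuousLinearMap.mul ℝ A (Ring.inverse g1))))))) := by
      rw [hf]; exact (((hLd q).hasFDerivAt).comp g3 hk).fderiv
    rw [show T3 Lag (g1, g2, g3) = _ from hfd]
    simp only [ContinuousLinearMap.comp_apply, ContinuousLinearMap.prod_apply,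
      ContinuousLinearMap.zero_apply, ContinuousLinearMap.smul_apply,
      ContinuousLinearMap.mul_apply']
    rw [← mul_assoc, fderiv_tri Lbar q (hLd q), hlam, map_smul]
    have harg : τ (Δs • η0) * ζ * Ring.inverse (τ (Δs • η0)) * (Ring.inverse g1 * g3)
        = Ring.inverse g1 * g3 * ζ := by
      rw [htau3, Ring.inverse_mul_cancel_right _ _ hU3]
    rw [harg]
    simp [smul_eq_mul]

end
end

section
/- Let G be a matrix Lie group and 𝓛̄_d(Δ_a^j, g_a^j, ξ_a^j, η_a^j) a trivialized discrete Lagrangian density invariant under left translation by a subgroup H ≤ G in the g-variable (𝓛̄_d(Δ, hg, ξ, η) = 𝓛̄_d(Δ, g, ξ, η) for all h ∈ H). Then the three discrete momentum maps J¹, J², J³ : (triangle data) × G × 𝔤 × 𝔤 → 𝔥* defined by J¹ := i* Ad*_{g^{-1}}( g^{-1}D_g𝓛̄ - (1/Δt)μ - (1/Δs)λ ), J² := i* (1/Δt) Ad*_{g^{-1}} μ, J³ := i* (1/Δs) Ad*_{g^{-1}} λ satisfy J¹ + J² + J³ = 0. -/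
open scoped Topology

noncomputable section

variable {A : Type*} [NormedRing A] [NormedAlgebra ℝ A] [CompleteSpace A]

/-- Local discrete Noether theorem on a Lie group: if the trivialized discrete
Lagrangian density `𝓛̄_d(Δ, g, ξ, η)` is invariant in `g` under left
translation by the subgroup `H` (here: by the one-parameter subgroups
`exp(tζ)`, `ζ ∈ 𝔥`), then the three discrete momentum maps
`J¹ = i* Ad*_{g⁻¹}(g⁻¹D_g𝓛̄ - μ/Δt - λ/Δs)`, `J² = i* Ad*_{g⁻¹}μ/Δt`,
`J³ = i* Ad*_{g⁻¹}λ/Δs` sum to zero on `𝔥*`. -/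
theorem trivialized_local_Noether
    (τ τinv : A → A) (hτ : ContDiff ℝ (⊤ : ℕ∞) τ) (hτinv : ContDiff ℝ (⊤ : ℕ∞) τinv)
    (hτ0 : τ 0 = 1)
    (Δt Δs : ℝ) (hΔt : 0 < Δt) (hΔs : 0 < Δs)
    (𝔥 : Submodule ℝ A)
    (Lbar : A × A × A → ℝ) (hLbar : ContDiff ℝ (⊤ : ℕ∞) Lbar)
    (hinv : ∀ ζ ∈ 𝔥, ∀ (t : ℝ) (g ξ η : A),
      Lbar (NormedSpace.exp (t • ζ) * g, ξ, η) = Lbar (g, ξ, η))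
    (g ξ η : A) (hg : IsUnit g) :
    let q : A × A × A := (g, ξ, η)
    let μ : A → ℝ := fun w => (T2 Lbar q) (dRtauInv τ τinv (Δt • ξ) w)
    let lam : A → ℝ := fun w => (T3 Lbar q) (dRtauInv τ τinv (Δs • η) w)
    ∀ ζ ∈ 𝔥,
      -- `⟨J¹,ζ⟩ + ⟨J²,ζ⟩ + ⟨J³,ζ⟩ = 0`, all evaluated on `Ad_{g⁻¹}ζ = g⁻¹ζg`
      ((T1 Lbar q) (g * (Ring.inverse g * ζ * g)) -
          Δt⁻¹ * μ (Ring.inverse g * ζ * g) - Δs⁻¹ * lam (Ring.inverse g * ζ * g)) +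
        Δt⁻¹ * μ (Ring.inverse g * ζ * g) +
        Δs⁻¹ * lam (Ring.inverse g * ζ * g) = 0 := by
  intro q μ lam ζ hζ
  have hgg : g * (Ring.inverse g * ζ * g) = ζ * g := by
    obtain ⟨u, rfl⟩ := hg
    rw [Ring.inverse_unit]
    rw [show (↑u⁻¹ * ζ * (u:A)) = ↑u⁻¹ * (ζ * ↑u) from mul_assoc _ _ _,
      ← mul_assoc]
    simp
  have key : (T1 Lbar q) (ζ * g) = 0 := by
    have hexp : HasDerivAt (fun t : ℝ => NormedSpace.exp (t • ζ) * g)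
        (ζ * g) 0 := by
      have h1 := hasDerivAt_exp_smul_const (𝕂 := ℝ) ζ (0 : ℝ)
      simpa using h1.mul_const g
    have hd : DifferentiableAt ℝ (fun x : A => Lbar (x, ξ, η)) g := by
      have : DifferentiableAt ℝ Lbar (g, ξ, η) :=
        (hLbar.differentiable (by simp)).differentiableAt
      exact this.comp g (by fun_prop)
    have hcomp : HasDerivAt (fun t : ℝ => Lbar (NormedSpace.exp (t • ζ) * g, ξ, η))
        ((T1 Lbar q) (ζ * g)) 0 := by
      have hg0 : NormedSpace.exp ((0:ℝ) • ζ) * g = g := by simp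
      have hd' := hd.hasFDerivAt
      rw [← hg0] at hd'
      have := hd'.comp_hasDerivAt 0 hexp
      simpa [T1, q, Function.comp_def] using this
    have hconst : (fun t : ℝ => Lbar (NormedSpace.exp (t • ζ) * g, ξ, η)) =
        fun _ : ℝ => Lbar (g, ξ, η) := by
      funext t; exact hinv ζ hζ t g ξ η
    have := hcomp
    rw [hconst] at this
    simpa using this.unique (hasDerivAt_const 0 _)
  rw [hgg]
  rw [key]
  ring

end
end
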